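/- arXiv:2101.01816 — 4 statements merged into one kernel-verified Lean document; each statement's English description precedes it below -/
import Mathlib

section
/- Let R be a strictly proper scoring rule bounded in [0,1] and n ≥ 2. For any forecaster i with belief p_i in [0,1], any fixed reports y_j in [0,1] for j ≠ i, and any report y ≠ p_i, the expected ELF selection probability E_{X~Bernoulli(p_i)}[f_i(y_1,...,y,...,y_n,X)] is strictly less than E_{X~Bernoulli(p_i)}[f_i(y_1,...,p_i,...,y_n,X)]. That is, truthful reporting strictly maximizes forecaster i's expected probability of being selected by ELF. -/
/-!
The expected selection probability of forecaster `i` is `1/n` plus `1/n` times the expected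
score of `i`'s own report minus a term that depends only on the other reports, so it is a
strictly increasing function of `i`'s expected score, which strict properness maximizes
exactly at the truthful report.
-/

open Finset

/-- The ELF selection probability of forecaster `i`. -/
noncomputable def elfProb (n : ℕ) (R : ℝ → Bool → ℝ) (y : Fin n → ℝ) (x : Bool)
    (i : Fin n) : ℝ :=
  1 / n + (1 / n) * (R (y i) x - (1 / (n - 1)) * ∑ j ∈ univ.erase i, R (y j) x)

noncomputable def expectedScore (R : ℝ → Bool → ℝ) (p v : ℝ) : ℝ :=
  p * R v true + (1 - p) * R v false

lemma elfProb_update_self (n : ℕ) (R : ℝ → Bool → ℝ) (y : Fin n → ℝ) (i : Fin n) (v : ℝ)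
    (x : Bool) :
    elfProb n R (Function.update y i v) x i
      = 1 / n + (1 / n) * (R v x - (1 / (n - 1)) * ∑ j ∈ univ.erase i, R (y j) x) := by
  have hothers : ∑ j ∈ univ.erase i, R (Function.update y i v j) x
      = ∑ j ∈ univ.erase i, R (y j) x :=
    sum_congr rfl fun j hj => by rw [Function.update_of_ne (ne_of_mem_erase hj)]
  rw [elfProb, Function.update_self, hothers]

lemma expected_elfProb_update_self (n : ℕ) (R : ℝ → Bool → ℝ) (y : Fin n → ℝ) (i : Fin n)
    (p v : ℝ) :
    p * elfProb n R (Function.update y i v) true i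
        + (1 - p) * elfProb n R (Function.update y i v) false i
      = 1 / n + (1 / n) * (expectedScore R p v
          - (1 / (n - 1)) * ∑ j ∈ univ.erase i, expectedScore R p (y j)) := by
  simp only [elfProb_update_self, expectedScore, sum_add_distrib, ← mul_sum]
  ring

theorem elf_strictly_incentive_compatible_general (n : ℕ) (hn : 2 ≤ n)
    (R : ℝ → Bool → ℝ)
    (hproper : ∀ p ∈ Set.Icc (0:ℝ) 1, ∀ y ∈ Set.Icc (0:ℝ) 1, y ≠ p →
      p * R p true + (1 - p) * R p false > p * R y true + (1 - p) * R y false)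
    (i : Fin n) (p : ℝ) (hp : p ∈ Set.Icc (0:ℝ) 1)
    (y : Fin n → ℝ)
    (y' : ℝ) (hy' : y' ∈ Set.Icc (0:ℝ) 1) (hne : y' ≠ p) :
    p * elfProb n R (Function.update y i y') true i
      + (1 - p) * elfProb n R (Function.update y i y') false i
    < p * elfProb n R (Function.update y i p) true i
      + (1 - p) * elfProb n R (Function.update y i p) false i := by
  have hscore : expectedScore R p y' < expectedScore R p p := hproper p hp y' hy' hne
  have hn_pos : (0 : ℝ) < n := by exact_mod_cast (by omega : 0 < n)
  rw [expected_elfProb_update_self, expected_elfProb_update_self]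
  gcongr

/-- ELF is strictly incentive compatible: for a strictly proper scoring rule `R`
bounded in `[0,1]`, a forecaster `i` with belief `p ∈ [0,1]`, fixed reports of the
others, and any misreport `y' ≠ p`, the expected (over `X ~ Bernoulli(p)`) ELF
selection probability under `y'` is strictly less than under the truthful report `p`. -/
theorem elf_strictly_incentive_compatible (n : ℕ) (hn : 2 ≤ n)
    (R : ℝ → Bool → ℝ)
    (hbdd : ∀ y ∈ Set.Icc (0:ℝ) 1, ∀ x : Bool, R y x ∈ Set.Icc (0:ℝ) 1)
    (hproper : ∀ p ∈ Set.Icc (0:ℝ) 1, ∀ y ∈ Set.Icc (0:ℝ) 1, y ≠ p →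
      p * R p true + (1 - p) * R p false > p * R y true + (1 - p) * R y false)
    (i : Fin n) (p : ℝ) (hp : p ∈ Set.Icc (0:ℝ) 1)
    (y : Fin n → ℝ) (hy : ∀ j, y j ∈ Set.Icc (0:ℝ) 1)
    (y' : ℝ) (hy' : y' ∈ Set.Icc (0:ℝ) 1) (hne : y' ≠ p) :
    p * elfProb n R (Function.update y i y') true i
      + (1 - p) * elfProb n R (Function.update y i y') false i
    < p * elfProb n R (Function.update y i p) true i
      + (1 - p) * elfProb n R (Function.update y i p) false i :=
  elf_strictly_incentive_compatible_general n hn R hproper i p hp y y' hy' hne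
end

section
/- Under IELF with m independent events, the difference in the expected number of events won by the most accurate forecaster i and by any other forecaster j satisfies E[Z_i] - E[Z_j] = m·(R(y_i,θ) - R(y_j,θ))/(n-1) ≥ mΔ/(n-1), where Δ is the minimum gap between i's expected average score and any other forecaster's. -/
open Finset

/-- Per-event ELF win probability of forecaster `i` on event `k` given outcome `x`. -/
noncomputable def eventWinProb (n m : ℕ) (R : ℝ → Bool → ℝ)
    (y : Fin n → Fin m → ℝ) (k : Fin m) (x : Bool) (i : Fin n) : ℝ :=
  1 / n + (1 / n) * (R (y i k) x - (1 / (n - 1)) * ∑ j ∈ univ.erase i, R (y j k) x)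

/-- Expected number of events won by forecaster `i` under independent events with
Bernoulli parameters `θ k`. -/
noncomputable def expWins (n m : ℕ) (R : ℝ → Bool → ℝ)
    (y : Fin n → Fin m → ℝ) (θ : Fin m → ℝ) (i : Fin n) : ℝ :=
  ∑ k, (θ k * eventWinProb n m R y k true i + (1 - θ k) * eventWinProb n m R y k false i)

/-- Expected average score of forecaster `i`. -/
noncomputable def expAvgScore (n m : ℕ) (R : ℝ → Bool → ℝ)
    (y : Fin n → Fin m → ℝ) (θ : Fin m → ℝ) (i : Fin n) : ℝ :=
  (1 / m) * ∑ k, (θ k * R (y i k) true + (1 - θ k) * R (y i k) false)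

lemma one_lt_natCast_of_ne {n : ℕ} {i j : Fin n} (hij : i ≠ j) : (1 : ℝ) < n := by
  have : Nontrivial (Fin n) := nontrivial_of_ne i j hij
  exact_mod_cast Fintype.card_fin n ▸ Fintype.one_lt_card

-- The total score `∑ l, R (y l k) x` enters every forecaster's win probability alike and cancels.
lemma eventWinProb_sub_eventWinProb (n m : ℕ) (R : ℝ → Bool → ℝ)
    (y : Fin n → Fin m → ℝ) (k : Fin m) (x : Bool) (i j : Fin n) :
    eventWinProb n m R y k x i - eventWinProb n m R y k x j =
      (R (y i k) x - R (y j k) x) / (n - 1) := by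
  rcases eq_or_ne i j with rfl | hij
  · simp
  have hn : (n : ℝ) - 1 ≠ 0 := (sub_pos.2 (one_lt_natCast_of_ne hij)).ne'
  have hn0 : (n : ℝ) ≠ 0 := by linarith [one_lt_natCast_of_ne hij]
  simp only [eventWinProb, sum_erase_eq_sub (mem_univ _)]
  field_simp
  ring

lemma natCast_mul_expAvgScore (n m : ℕ) (R : ℝ → Bool → ℝ)
    (y : Fin n → Fin m → ℝ) (θ : Fin m → ℝ) (i : Fin n) :
    m * expAvgScore n m R y θ i = ∑ k, (θ k * R (y i k) true + (1 - θ k) * R (y i k) false) := by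
  rcases Nat.eq_zero_or_pos m with rfl | hm
  · simp
  rw [expAvgScore, ← mul_assoc, mul_one_div_cancel (by positivity), one_mul]

lemma expWins_sub_expWins (n m : ℕ) (R : ℝ → Bool → ℝ)
    (y : Fin n → Fin m → ℝ) (θ : Fin m → ℝ) (i j : Fin n) :
    expWins n m R y θ i - expWins n m R y θ j =
      m * (expAvgScore n m R y θ i - expAvgScore n m R y θ j) / (n - 1) := by
  rw [mul_sub, natCast_mul_expAvgScore, natCast_mul_expAvgScore, expWins, expWins,
    ← sum_sub_distrib, ← sum_sub_distrib, sum_div]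
  refine sum_congr rfl fun k _ => ?_
  have ht := eventWinProb_sub_eventWinProb n m R y k true i j
  have hf := eventWinProb_sub_eventWinProb n m R y k false i j
  linear_combination θ k * ht + (1 - θ k) * hf

theorem ielf_expected_wins_gap_general (n m : ℕ)
    (R : ℝ → Bool → ℝ)
    (y : Fin n → Fin m → ℝ)
    (θ : Fin m → ℝ)
    (i : Fin n) (Δ : ℝ)
    (hgap : ∀ j, j ≠ i → expAvgScore n m R y θ i - expAvgScore n m R y θ j ≥ Δ) :
    ∀ j, j ≠ i →
      expWins n m R y θ i - expWins n m R y θ j =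
        m * (expAvgScore n m R y θ i - expAvgScore n m R y θ j) / (n - 1) ∧
      expWins n m R y θ i - expWins n m R y θ j ≥ m * Δ / (n - 1) := by
  intro j hj
  have hn : (0 : ℝ) < n - 1 := sub_pos.2 (one_lt_natCast_of_ne hj.symm)
  rw [expWins_sub_expWins]
  exact ⟨rfl, by gcongr; exact hgap j hj⟩

/-- Under IELF, the expected number of events won by the most accurate forecaster
`i` exceeds that of any other forecaster `j` by exactly
`m (R(y_i,θ) - R(y_j,θ)) / (n-1) ≥ m Δ / (n-1)`. -/
theorem ielf_expected_wins_gap (n m : ℕ) (hn : 2 ≤ n) (hm : 1 ≤ m)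
    (R : ℝ → Bool → ℝ)
    (hR : ∀ y ∈ Set.Icc (0:ℝ) 1, ∀ x : Bool, R y x ∈ Set.Icc (0:ℝ) 1)
    (y : Fin n → Fin m → ℝ) (hy : ∀ i k, y i k ∈ Set.Icc (0:ℝ) 1)
    (θ : Fin m → ℝ) (hθ : ∀ k, θ k ∈ Set.Icc (0:ℝ) 1)
    (i : Fin n) (Δ : ℝ) (hΔ : 0 < Δ)
    (hgap : ∀ j, j ≠ i → expAvgScore n m R y θ i - expAvgScore n m R y θ j ≥ Δ) :
    ∀ j, j ≠ i →
      expWins n m R y θ i - expWins n m R y θ j =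
        m * (expAvgScore n m R y θ i - expAvgScore n m R y θ j) / (n - 1) ∧
      expWins n m R y θ i - expWins n m R y θ j ≥ m * Δ / (n - 1) :=
  ielf_expected_wins_gap_general n m R y θ i Δ hgap
end

section
/- Under IELF with m independent binary events, if Δ > 0 is the accuracy gap between the most accurate forecaster i and all others, then for each j ≠ i the probability that j wins at least as many events as i is at most 2·exp(-mΔ²/(2(n-1)²)), and hence IELF selects forecaster i with probability at least 1 - 2(n-1)·exp(-mΔ²/(2(n-1)²)). -/
/-!
For `j ≠ i`, the event `Z i ≤ Z j` forces `Z j` to exceed its mean by `c = mΔ/(2(n-1))` or `Z i`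
to fall below its mean by `c`, because the means are `2c` apart. By Hoeffding's lemma each
centred sum of `m` independent `[0,1]`-valued variables is sub-Gaussian with parameter `m/4`,
so each of these deviations has probability at most `exp(-2c²/m) = exp(-mΔ²/(2(n-1)²))`. IELF can
only miss `i` on the union of the `n - 1` events `Z i ≤ Z j`.
-/

open MeasureTheory ProbabilityTheory Real

section UnionBounds

variable {Ω : Type*} [MeasurableSpace Ω] {μ : Measure Ω}

theorem measureReal_le_le_add_of_integral_add_two_mul_le [IsFiniteMeasure μ] {X Y : Ω → ℝ}
    {c : ℝ} (hgap : μ[Y] + 2 * c ≤ μ[X]) :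
    μ.real {ω | X ω ≤ Y ω} ≤ μ.real {ω | μ[Y] + c ≤ Y ω} + μ.real {ω | X ω ≤ μ[X] - c} := by
  have hsub : {ω | X ω ≤ Y ω} ⊆ {ω | μ[Y] + c ≤ Y ω} ∪ {ω | X ω ≤ μ[X] - c} := by
    intro ω hω
    by_contra hout
    simp only [Set.mem_union, Set.mem_ofPred_eq, not_or, not_le] at hω hout
    linarith
  exact (measureReal_mono hsub).trans (measureReal_union_le _ _)

theorem one_sub_sum_measureReal_le_measureReal_eq [IsProbabilityMeasure μ] {ι : Type*}
    [Fintype ι] [DecidableEq ι] (sel : Ω → ι) (i : ι) (E : ι → Set Ω)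
    (hE : ∀ ω, sel ω ≠ i → ω ∈ E (sel ω)) :
    1 - ∑ j ∈ Finset.univ.erase i, μ.real (E j) ≤ μ.real {ω | sel ω = i} := by
  have hcover : Set.univ ⊆ {ω | sel ω = i} ∪ ⋃ j ∈ Finset.univ.erase i, E j := by
    intro ω _
    by_cases hω : sel ω = i
    · exact Or.inl hω
    · exact Or.inr (Set.mem_biUnion (Finset.mem_erase.mpr ⟨hω, Finset.mem_univ _⟩) (hE ω hω))
  have := calc
    1 = μ.real Set.univ := probReal_univ.symm
    _ ≤ μ.real ({ω | sel ω = i} ∪ ⋃ j ∈ Finset.univ.erase i, E j) := measureReal_mono hcover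
    _ ≤ μ.real {ω | sel ω = i} + ∑ j ∈ Finset.univ.erase i, μ.real (E j) :=
      (measureReal_union_le _ _).trans (by gcongr; exact measureReal_biUnion_finset_le _ _)
  linarith

theorem one_sub_card_sub_one_mul_le_measureReal_eq [IsProbabilityMeasure μ] {ι : Type*}
    [Fintype ι] [DecidableEq ι] (sel : Ω → ι) (i : ι) (E : ι → Set Ω)
    (hE : ∀ ω, sel ω ≠ i → ω ∈ E (sel ω)) {b : ℝ} (hb : ∀ j, j ≠ i → μ.real (E j) ≤ b) :
    1 - (Fintype.card ι - 1) * b ≤ μ.real {ω | sel ω = i} := by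
  calc 1 - (Fintype.card ι - 1) * b = 1 - ∑ j ∈ Finset.univ.erase i, b := by
        rw [Finset.sum_const, Finset.card_erase_of_mem (Finset.mem_univ i), Finset.card_univ,
          nsmul_eq_mul, Nat.cast_pred (Fintype.card_pos_iff.mpr ⟨i⟩)]
    _ ≤ 1 - ∑ j ∈ Finset.univ.erase i, μ.real (E j) := by
        gcongr with j hj
        exact hb j (Finset.ne_of_mem_erase hj)
    _ ≤ μ.real {ω | sel ω = i} := one_sub_sum_measureReal_le_measureReal_eq sel i E hE

end UnionBounds

section Hoeffding

variable {Ω ι : Type*} [MeasurableSpace Ω] {μ : Measure Ω} [IsProbabilityMeasure μ] [Fintype ι]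
  {X : ι → Ω → ℝ}

theorem hasSubgaussianMGF_sum_sub_integral_of_mem_Icc_zero_one
    (hmeas : ∀ k, Measurable (X k)) (hbdd : ∀ k ω, X k ω ∈ Set.Icc (0 : ℝ) 1)
    (hindep : iIndepFun X μ) :
    HasSubgaussianMGF (fun ω ↦ ∑ k, X k ω - ∫ ω', ∑ k, X k ω' ∂μ)
      (Fintype.card ι / 4) μ := by
  have hcentered (k : ι) : HasSubgaussianMGF (fun ω ↦ X k ω - μ[X k]) (1 / 4) μ := by
    convert hasSubgaussianMGF_of_mem_Icc (hmeas k).aemeasurable (ae_of_all μ (hbdd k)) using 1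
    norm_num
  have hindep_centered : iIndepFun (fun k ω ↦ X k ω - μ[X k]) μ :=
    hindep.comp (fun k t ↦ t - ∫ ω, X k ω ∂μ) fun k ↦ measurable_id.sub_const _
  have hsum := HasSubgaussianMGF.sum_of_iIndepFun hindep_centered (s := Finset.univ)
    fun k _ ↦ hcentered k
  have hint (k : ι) (_ : k ∈ Finset.univ) : Integrable (X k) μ :=
    Integrable.of_mem_Icc 0 1 (hmeas k).aemeasurable (ae_of_all μ (hbdd k))
  convert hsum using 2 with ω
  · simp [Finset.sum_sub_distrib, integral_finsetSum _ hint]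
  · simp [div_eq_mul_inv]

theorem measureReal_integral_add_le_sum_le
    (hmeas : ∀ k, Measurable (X k)) (hbdd : ∀ k ω, X k ω ∈ Set.Icc (0 : ℝ) 1)
    (hindep : iIndepFun X μ) {ε : ℝ} (hε : 0 ≤ ε) :
    μ.real {ω | (∫ ω', ∑ k, X k ω' ∂μ) + ε ≤ ∑ k, X k ω} ≤
      exp (-2 * ε ^ 2 / Fintype.card ι) := by
  calc μ.real {ω | (∫ ω', ∑ k, X k ω' ∂μ) + ε ≤ ∑ k, X k ω}
      = μ.real {ω | ε ≤ ∑ k, X k ω - ∫ ω', ∑ k, X k ω' ∂μ} := by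
        simp only [le_sub_iff_add_le']
    _ ≤ exp (-ε ^ 2 / (2 * (Fintype.card ι / 4 : NNReal))) :=
        (hasSubgaussianMGF_sum_sub_integral_of_mem_Icc_zero_one hmeas hbdd hindep).measure_ge_le hε
    _ = exp (-2 * ε ^ 2 / Fintype.card ι) := by
        congr 1; push_cast; ring

theorem measureReal_sum_le_integral_sub_le
    (hmeas : ∀ k, Measurable (X k)) (hbdd : ∀ k ω, X k ω ∈ Set.Icc (0 : ℝ) 1)
    (hindep : iIndepFun X μ) {ε : ℝ} (hε : 0 ≤ ε) :
    μ.real {ω | ∑ k, X k ω ≤ (∫ ω', ∑ k, X k ω' ∂μ) - ε} ≤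
      exp (-2 * ε ^ 2 / Fintype.card ι) := by
  calc μ.real {ω | ∑ k, X k ω ≤ (∫ ω', ∑ k, X k ω' ∂μ) - ε}
      = μ.real {ω | ε ≤ -(∑ k, X k ω - ∫ ω', ∑ k, X k ω' ∂μ)} := by
        simp only [neg_sub, le_sub_comm]
    _ ≤ exp (-ε ^ 2 / (2 * (Fintype.card ι / 4 : NNReal))) :=
        (hasSubgaussianMGF_sum_sub_integral_of_mem_Icc_zero_one hmeas hbdd hindep).neg.measure_ge_le
          hε
    _ = exp (-2 * ε ^ 2 / Fintype.card ι) := by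
        congr 1; push_cast; ring

theorem measureReal_sum_le_sum_le_two_mul_exp {Y : ι → Ω → ℝ}
    (hXmeas : ∀ k, Measurable (X k)) (hXbdd : ∀ k ω, X k ω ∈ Set.Icc (0 : ℝ) 1)
    (hXindep : iIndepFun X μ)
    (hYmeas : ∀ k, Measurable (Y k)) (hYbdd : ∀ k ω, Y k ω ∈ Set.Icc (0 : ℝ) 1)
    (hYindep : iIndepFun Y μ) {c : ℝ} (hc : 0 ≤ c)
    (hgap : (∫ ω, ∑ k, Y k ω ∂μ) + 2 * c ≤ ∫ ω, ∑ k, X k ω ∂μ) :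
    μ.real {ω | ∑ k, X k ω ≤ ∑ k, Y k ω} ≤ 2 * exp (-2 * c ^ 2 / Fintype.card ι) := by
  calc _ ≤ _ := measureReal_le_le_add_of_integral_add_two_mul_le hgap
    _ ≤ _ := add_le_add (measureReal_integral_add_le_sum_le hYmeas hYbdd hYindep hc)
        (measureReal_sum_le_integral_sub_le hXmeas hXbdd hXindep hc)
    _ = _ := by ring

end Hoeffding


theorem ielf_selects_best_with_high_probability_general
    {Ω : Type*} [MeasurableSpace Ω] (μ : Measure Ω) [IsProbabilityMeasure μ]
    (n m : ℕ)
    (W : Fin n → Fin m → Ω → ℝ)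
    (hWmeas : ∀ i k, Measurable (W i k))
    (hWbdd : ∀ i k ω, W i k ω ∈ Set.Icc (0:ℝ) 1)
    (hindep : ∀ i, ProbabilityTheory.iIndepFun (W i) μ)
    (Z : Fin n → Ω → ℝ) (hZ : ∀ i ω, Z i ω = ∑ k, W i k ω)
    (i : Fin n) (Δ : ℝ) (hΔ : 0 < Δ)
    (hgap : ∀ j, j ≠ i → (∫ ω, Z i ω ∂μ) - (∫ ω, Z j ω ∂μ) ≥ m * Δ / (n - 1))
    (sel : Ω → Fin n)
    (hsel : ∀ ω, ∀ j, sel ω = j → j ≠ i → Z i ω ≤ Z j ω) :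
    (∀ j, j ≠ i → (μ {ω | Z i ω ≤ Z j ω}).toReal ≤
        2 * Real.exp (-(m * Δ ^ 2) / (2 * (n - 1) ^ 2))) ∧
    (μ {ω | sel ω = i}).toReal ≥
      1 - 2 * (n - 1) * Real.exp (-(m * Δ ^ 2) / (2 * (n - 1) ^ 2)) := by
  obtain rfl : Z = fun j ω ↦ ∑ k, W j k ω := funext₂ hZ
  have hc : 0 ≤ m * (Δ / (2 * (n - 1 : ℝ))) := by
    have : (0 : ℝ) ≤ n - 1 := sub_nonneg.mpr (Nat.one_le_cast.mpr i.pos)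
    positivity
  -- `generalize` keeps `ring` from expanding `n - 1` under `⁻¹`.
  have htwo_c : 2 * (m * (Δ / (2 * (n - 1 : ℝ)))) = m * Δ / (n - 1) := by
    generalize (n : ℝ) - 1 = N; ring
  have hexponent : -2 * (m * (Δ / (2 * (n - 1 : ℝ)))) ^ 2 / Fintype.card (Fin m) =
      -(m * Δ ^ 2) / (2 * (n - 1) ^ 2) := by
    generalize (n : ℝ) - 1 = N
    calc _ = -2 * (Δ / (2 * N)) ^ 2 * (m * m / m) := by rw [Fintype.card_fin]; ring
      _ = _ := by rw [mul_self_div_self]; ring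
  have hpair : ∀ j, j ≠ i → μ.real {ω | ∑ k, W i k ω ≤ ∑ k, W j k ω} ≤
      2 * exp (-(m * Δ ^ 2) / (2 * (n - 1) ^ 2)) := fun j hj ↦ by
    rw [← hexponent]
    exact measureReal_sum_le_sum_le_two_mul_exp (hWmeas i) (hWbdd i) (hindep i)
      (hWmeas j) (hWbdd j) (hindep j) hc (by linarith [hgap j hj])
  refine ⟨hpair, Eq.trans_le ?_ <|
    one_sub_card_sub_one_mul_le_measureReal_eq sel i _ (fun ω hω ↦ hsel ω _ rfl hω) hpair⟩
  rw [Fintype.card_fin]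
  ring

/-- Under IELF with `m` independent events, the probability that any `j ≠ i` wins
at least as many events as the most accurate forecaster `i` is at most
`2 exp(-mΔ²/(2(n-1)²))`; hence IELF (which can only select a forecaster winning
at least as many events as `i`) selects `i` with probability at least
`1 - 2(n-1) exp(-mΔ²/(2(n-1)²))`. -/
theorem ielf_selects_best_with_high_probability
    {Ω : Type*} [MeasurableSpace Ω] (μ : Measure Ω) [IsProbabilityMeasure μ]
    (n m : ℕ) (hn : 2 ≤ n) (hm : 1 ≤ m)
    (W : Fin n → Fin m → Ω → ℝ)
    (hWmeas : ∀ i k, Measurable (W i k))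
    (hWbdd : ∀ i k ω, W i k ω ∈ Set.Icc (0:ℝ) 1)
    (hindep : ∀ i, ProbabilityTheory.iIndepFun (W i) μ)
    (Z : Fin n → Ω → ℝ) (hZ : ∀ i ω, Z i ω = ∑ k, W i k ω)
    (i : Fin n) (Δ : ℝ) (hΔ : 0 < Δ)
    (hgap : ∀ j, j ≠ i → (∫ ω, Z i ω ∂μ) - (∫ ω, Z j ω ∂μ) ≥ m * Δ / (n - 1))
    (sel : Ω → Fin n) (hselMeas : ∀ j, MeasurableSet {ω | sel ω = j})
    (hsel : ∀ ω, ∀ j, sel ω = j → j ≠ i → Z i ω ≤ Z j ω) :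
    (∀ j, j ≠ i → (μ {ω | Z i ω ≤ Z j ω}).toReal ≤
        2 * Real.exp (-(m * Δ ^ 2) / (2 * (n - 1) ^ 2))) ∧
    (μ {ω | sel ω = i}).toReal ≥
      1 - 2 * (n - 1) * Real.exp (-(m * Δ ^ 2) / (2 * (n - 1) ^ 2)) :=
  ielf_selects_best_with_high_probability_general μ n m W hWmeas hWbdd hindep Z hZ i Δ hΔ hgap sel
    hsel
end

section
/- Proper scoring rule selection violates incentive compatibility: with n ≥ 2 forecasters and m events, for any strictly proper scoring rule R, there exist a belief vector p_i and a joint distribution D over outcomes and others' reports with E_D[X] = p_i such that truthfully reporting p_i gives forecaster i selection probability 0.2 under the highest-total-score mechanism, while misreporting y'_i = (0.5,...,0.5,1) gives selection probability 0.8. -/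
/-! Comparing the expected scores of two reports under both beliefs shows that a strictly proper
score has `R · true` strictly increasing and `R · false` strictly decreasing on `[0, 1]`. Let every
other forecaster report `0.5` on all events but the last and `0.9` on the last; since forecaster `0`
also reports `0.5` there, only the last event decides selection. With the last event
`Bernoulli 0.8`, the truthful report `0.8` beats `0.9` exactly when the last event fails
(probability `0.2`), the report `1` exactly when it happens (probability `0.8`). -/

open Finset

/-- The forecaster with the highest total score, ties broken by (least) index. -/
noncomputable def selectMax {n : ℕ} [NeZero n] (s : Fin n → ℝ) : Fin n :=
  (univ.filter (fun i => ∀ j, s j ≤ s i)).min' (by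
    obtain ⟨i, -, hi⟩ := Finset.exists_max_image (univ : Finset (Fin n)) s
      ⟨0, Finset.mem_univ _⟩
    exact ⟨i, Finset.mem_filter.mpr ⟨Finset.mem_univ _, fun j => hi j (Finset.mem_univ _)⟩⟩)

def IsStrictlyProper (R : ℝ → Bool → ℝ) : Prop :=
  ∀ p ∈ Set.Icc (0:ℝ) 1, ∀ y ∈ Set.Icc (0:ℝ) 1, y ≠ p →
    p * R p true + (1 - p) * R p false > p * R y true + (1 - p) * R y false

namespace IsStrictlyProper

variable {R : ℝ → Bool → ℝ} (hR : IsStrictlyProper R)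
include hR

theorem strictMonoOn_true : StrictMonoOn (fun y => R y true) (Set.Icc 0 1) := by
  intro q hq p hp hqp
  have hpq := hR p hp q hq hqp.ne
  have hqp' := hR q hq p hp hqp.ne'
  simp only [Set.mem_Icc] at hp hq
  dsimp only
  nlinarith

theorem strictAntiOn_false : StrictAntiOn (fun y => R y false) (Set.Icc 0 1) := by
  intro q hq p hp hqp
  have hpq := hR p hp q hq hqp.ne
  have hqp' := hR q hq p hp hqp.ne'
  simp only [Set.mem_Icc] at hp hq
  dsimp only
  nlinarith

end IsStrictlyProper

theorem selectMax_eq_zero_iff {n : ℕ} [NeZero n] (s : Fin n → ℝ) :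
    selectMax s = 0 ↔ ∀ j, s j ≤ s 0 := by
  constructor
  · intro h j
    have hmem : selectMax s ∈ univ.filter (fun i => ∀ j, s j ≤ s i) := min'_mem _ _
    rw [h, mem_filter] at hmem
    exact hmem.2 j
  · intro h
    exact le_antisymm (min'_le _ _ (mem_filter.mpr ⟨mem_univ _, h⟩)) (Fin.zero_le _)

theorem Fintype.sum_le_sum_iff_of_eq_of_ne {ι M : Type*} [Fintype ι] [DecidableEq ι]
    [AddCommMonoid M] [PartialOrder M] [IsOrderedCancelAddMonoid M]
    {f g : ι → M} (a : ι) (hfg : ∀ k ≠ a, f k = g k) :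
    ∑ k, f k ≤ ∑ k, g k ↔ f a ≤ g a := by
  have hrest : ∑ k ∈ univ.erase a, f k = ∑ k ∈ univ.erase a, g k :=
    Finset.sum_congr rfl fun k hk => hfg k (ne_of_mem_erase hk)
  rw [← add_sum_erase _ f (mem_univ a), ← add_sum_erase _ g (mem_univ a), hrest,
    add_le_add_iff_right]

theorem selectMax_update_eq_zero_iff {n m : ℕ} [NeZero n] [Nontrivial (Fin n)]
    (R : ℝ → Bool → ℝ) (x : Fin m → Bool) {q r : Fin m → ℝ} (a : Fin m)
    (hrq : ∀ k ≠ a, q k = r k) :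
    selectMax (fun j => ∑ k, R (Function.update (fun _ => q) (0 : Fin n) r j k) (x k)) = 0 ↔
      R (q a) (x a) ≤ R (r a) (x a) := by
  have hscore : ∀ j : Fin n, j ≠ 0 →
      ((∑ k, R (Function.update (fun _ => q) 0 r j k) (x k) ≤
        ∑ k, R (Function.update (fun _ => q) 0 r 0 k) (x k)) ↔ R (q a) (x a) ≤ R (r a) (x a)) := by
    intro j hj
    simp only [Function.update_of_ne hj, Function.update_self]
    exact Fintype.sum_le_sum_iff_of_eq_of_ne a fun k hk => by rw [hrq k hk]
  rw [selectMax_eq_zero_iff]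
  obtain ⟨j, hj⟩ := exists_ne (0 : Fin n)
  refine ⟨fun h => (hscore j hj).mp (h j), fun h j => ?_⟩
  rcases eq_or_ne j 0 with rfl | hj
  · exact le_rfl
  · exact (hscore j hj).mpr h

theorem Finsupp.sum_sum_single_mul {α ι S : Type*} [NonUnitalNonAssocSemiring S]
    (s : Finset ι) (a : ι → α) (w : ι → S) (f : α → S) :
    (∑ i ∈ s, Finsupp.single (a i) (w i)).sum (fun x v => v * f x) = ∑ i ∈ s, w i * f (a i) := by
  rw [← Finsupp.sum_finsetSum_index (fun _ => zero_mul _) fun _ _ _ => add_mul _ _ _]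
  exact Finset.sum_congr rfl fun i _ => Finsupp.sum_single_index (zero_mul _)

def lastSpike (m : ℕ) (a : ℝ) : Fin m → ℝ := fun k => if (k : ℕ) = m - 1 then a else 0.5

def splitOutcome (m : ℕ) (b c : Bool) : Fin m → Bool := fun k => if (k : ℕ) = m - 1 then c else b

/-- The last event is `Bernoulli 0.8`, independent of the common value of the other events,
which is `Bernoulli 0.5`. -/
noncomputable def counterexampleDist (n m : ℕ) : ((Fin m → Bool) × (Fin n → Fin m → ℝ)) →₀ ℝ :=
  ∑ bc : Bool × Bool,
    Finsupp.single (splitOutcome m bc.1 bc.2, fun _ => lastSpike m 0.9) (if bc.2 then 0.4 else 0.1)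

section counterexampleDist

variable {n m : ℕ}

theorem lastSpike_mem_Icc {a : ℝ} (ha : a ∈ Set.Icc (0:ℝ) 1) (k : Fin m) :
    lastSpike m a k ∈ Set.Icc (0:ℝ) 1 := by
  unfold lastSpike
  split_ifs
  · exact ha
  · norm_num

theorem lastSpike_eq_of_ne (a b : ℝ) {k : Fin m} (hk : (k : ℕ) ≠ m - 1) :
    lastSpike m a k = lastSpike m b k := by
  simp only [lastSpike, hk, if_false]

theorem counterexampleDist_sum_mul (f : (Fin m → Bool) × (Fin n → Fin m → ℝ) → ℝ) :
    (counterexampleDist n m).sum (fun ω v => v * f ω) =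
      ∑ bc : Bool × Bool,
        (if bc.2 then 0.4 else 0.1) * f (splitOutcome m bc.1 bc.2, fun _ => lastSpike m 0.9) :=
  Finsupp.sum_sum_single_mul _ _ _ _

theorem counterexampleDist_nonneg (ω : (Fin m → Bool) × (Fin n → Fin m → ℝ)) :
    0 ≤ counterexampleDist n m ω := by
  rw [counterexampleDist, Finsupp.finsetSum_apply]
  refine sum_nonneg fun bc _ => ?_
  rw [Finsupp.single_apply]
  split_ifs <;> norm_num

theorem counterexampleDist_sum : (counterexampleDist n m).sum (fun _ v => v) = 1 := by
  have h := counterexampleDist_sum_mul (n := n) (m := m) fun _ => 1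
  simp only [mul_one] at h
  rw [h, Fintype.sum_prod_type]
  norm_num

theorem counterexampleDist_reports_mem_Icc :
    ∀ ω ∈ (counterexampleDist n m).support, ∀ j k, ω.2 j k ∈ Set.Icc (0:ℝ) 1 := by
  intro ω hω j k
  obtain ⟨bc, -, hbc⟩ := mem_biUnion.mp (Finsupp.support_finsetSum hω)
  rw [Finsupp.mem_support_single] at hbc
  rw [hbc.1]
  exact lastSpike_mem_Icc (by norm_num) k

theorem counterexampleDist_mean (k : Fin m) :
    (counterexampleDist n m).sum (fun ω v => v * (if ω.1 k then 1 else 0)) =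
      lastSpike m 0.8 k := by
  rw [counterexampleDist_sum_mul, Fintype.sum_prod_type]
  by_cases hk : (k : ℕ) = m - 1 <;> norm_num [splitOutcome, lastSpike, hk]

theorem counterexampleDist_selectMax [NeZero n] [Nontrivial (Fin n)] [NeZero m]
    (R : ℝ → Bool → ℝ) (a : ℝ) :
    (counterexampleDist n m).sum (fun ω v => v *
      (if selectMax (fun j => ∑ k, R (Function.update ω.2 0 (lastSpike m a) j k) (ω.1 k)) = 0
        then 1 else 0)) =
      0.2 * (if R 0.9 false ≤ R a false then 1 else 0) +
        0.8 * (if R 0.9 true ≤ R a true then 1 else 0) := by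
  have hlast : m - 1 < m := Nat.sub_one_lt (NeZero.ne m)
  have hsel : ∀ b c, selectMax (fun j => ∑ k,
      R (Function.update (fun _ => lastSpike m 0.9) (0 : Fin n) (lastSpike m a) j k)
        (splitOutcome m b c k)) = 0 ↔ R 0.9 c ≤ R a c := by
    intro b c
    rw [selectMax_update_eq_zero_iff R _ ⟨m - 1, hlast⟩ fun k hk =>
      lastSpike_eq_of_ne _ _ fun h => hk (Fin.ext h)]
    simp [lastSpike, splitOutcome]
  rw [counterexampleDist_sum_mul, Fintype.sum_prod_type]
  simp only [Fintype.sum_bool, hsel, ↓reduceIte, Bool.false_eq_true]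
  split_ifs <;> norm_num

end counterexampleDist

/-- Selecting the forecaster with the highest total proper score violates incentive
compatibility: for any strictly proper scoring rule `R`, `n ≥ 2` forecasters and
`m ≥ 1` events, there are a belief vector `p`, a joint distribution `D` over
outcomes and others' reports with `E_D[X] = p`, and the misreport
`y' = (0.5, …, 0.5, 1)`, such that truthfully reporting `p` gives forecaster `i`
selection probability `0.2` while misreporting `y'` gives `0.8`. -/
theorem proper_score_selection_not_IC (n m : ℕ) (hn : 2 ≤ n) (hm : 1 ≤ m)
    (R : ℝ → Bool → ℝ)
    (hproper : ∀ p ∈ Set.Icc (0:ℝ) 1, ∀ y ∈ Set.Icc (0:ℝ) 1, y ≠ p →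
      p * R p true + (1 - p) * R p false > p * R y true + (1 - p) * R y false) :
    haveI : NeZero n := ⟨by omega⟩
    ∃ (i : Fin n) (p : Fin m → ℝ)
      (D : ((Fin m → Bool) × (Fin n → Fin m → ℝ)) →₀ ℝ),
      let y' : Fin m → ℝ := fun k => if (k : ℕ) = m - 1 then 1 else 0.5
      let selProb : (Fin m → ℝ) → ℝ := fun r =>
        D.sum (fun ω v => v *
          (if selectMax (fun j => ∑ k, R (Function.update ω.2 i r j k) (ω.1 k)) = i
            then 1 else 0))
      (∀ k, p k ∈ Set.Icc (0:ℝ) 1) ∧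
      (∀ ω, 0 ≤ D ω) ∧
      D.sum (fun _ v => v) = 1 ∧
      (∀ ω ∈ D.support, ∀ j k, ω.2 j k ∈ Set.Icc (0:ℝ) 1) ∧
      (∀ k, D.sum (fun ω v => v * (if ω.1 k then 1 else 0)) = p k) ∧
      y' ≠ p ∧
      selProb p = 0.2 ∧ selProb y' = 0.8 := by
  have : NeZero n := ⟨by omega⟩
  have : NeZero m := ⟨by omega⟩
  have : Nontrivial (Fin n) := Fin.nontrivial_iff_two_le.mpr hn
  have hR : IsStrictlyProper R := hproper
  have h08 : (0.8 : ℝ) ∈ Set.Icc 0 1 := by norm_num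
  have h09 : (0.9 : ℝ) ∈ Set.Icc 0 1 := by norm_num
  have h1 : (1 : ℝ) ∈ Set.Icc 0 1 := by norm_num
  have hne : lastSpike m 1 ⟨m - 1, by omega⟩ ≠ lastSpike m 0.8 ⟨m - 1, by omega⟩ := by
    norm_num [lastSpike]
  refine ⟨0, lastSpike m 0.8, counterexampleDist n m, lastSpike_mem_Icc h08,
    counterexampleDist_nonneg, counterexampleDist_sum, counterexampleDist_reports_mem_Icc,
    counterexampleDist_mean, fun h => hne (congrFun h _), ?_, ?_⟩
  · refine (counterexampleDist_selectMax R 0.8).trans ?_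
    rw [if_pos (hR.strictAntiOn_false h08 h09 (by norm_num)).le,
      if_neg (hR.strictMonoOn_true h08 h09 (by norm_num)).not_ge]
    norm_num
  · refine (counterexampleDist_selectMax R 1).trans ?_
    rw [if_neg (hR.strictAntiOn_false h09 h1 (by norm_num)).not_ge,
      if_pos (hR.strictMonoOn_true h09 h1 (by norm_num)).le]
    norm_num
end
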